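/- Let G be a finite connected simple graph such that the toric ideal I_G is generated by quadratic binomials, and let T_G = {M_1,...,M_r} be the set of indispensable monomials of I_G. Then C_min = {supp(M_1),...,supp(M_r)}; that is, a subset E of {1,...,m} is a minimal element of the collection of supports of positive/negative parts of circuits if and only if E is the support of an indispensable monomial. -/

import Mathlib

/-!
Both sides consist of the sets `{a, b}` for which `x_a x_b` shares its fiber with a different
monomial `x_c x_d`, i.e. `e a` and `e b` are opposite edges of a `4`-cycle.

In a simple graph a nonzero integer vector in the kernel of the incidence matrix has at least two
positive and at least two negative entries: were `e p` the only edge of positive weight, every edge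
of negative weight would need both endpoints on `e p`. So for such a pair `x_a x_b - x_c x_d` is
a circuit whose positive support `{a, b}` is minimal in `C`, and `x_a x_b` is indispensable: a
binomial generating set must move `x_a x_b` inside its fiber, and no proper divisor of `x_a x_b`
can be moved.

Conversely, for `E = supp u₊ ∈ C_min` the binomial `x^u₊ - x^u₋` lies in `I_G`, so some quadratic
generator `x_a x_b - x_c x_d` moves `x^u₊`; then `{a, b} ⊆ E`, and minimality gives `E = {a, b}`.
An indispensable monomial, in turn, is a term of one of the quadratic generators.
-/

open MvPolynomial

noncomputable section

/-- The exponent of the variable `t j` in the image of `x i`: it is `1` if the vertex `j`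
is an endpoint of the edge `e i`, and `0` otherwise (incidence vector of the edge `e i`). -/
def incid {n m : ℕ} (e : Fin m → Sym2 (Fin n)) (i : Fin m) (j : Fin n) : ℕ :=
  if j ∈ e i then 1 else 0

/-- The `K`-algebra homomorphism `K[x_1,…,x_m] → K[t_1,…,t_n]` sending `x i` to
`t_j t_k`, where `e i = {v_j, v_k}`. -/
def toricMap (K : Type*) [CommRing K] {n m : ℕ} (e : Fin m → Sym2 (Fin n)) :
    MvPolynomial (Fin m) K →ₐ[K] MvPolynomial (Fin n) K :=
  aeval fun i => ∏ j, X j ^ incid e i j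

/-- The toric ideal `I_G` of the graph with edges `e`. -/
def toricIdeal (K : Type*) [CommRing K] {n m : ℕ} (e : Fin m → Sym2 (Fin n)) :
    Ideal (MvPolynomial (Fin m) K) :=
  RingHom.ker (toricMap K e)

/-- A binomial is a difference of two monomials. -/
def IsBinomial {K : Type*} [CommRing K] {σ : Type*} (p : MvPolynomial σ K) : Prop :=
  ∃ u v : σ →₀ ℕ, p = monomial u 1 - monomial v 1

/-- A nonzero integer vector `u` in the kernel of the incidence matrix `M_G` is a circuit
if its support is minimal among supports of nonzero kernel elements and its coordinates
are relatively prime. -/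
def IsCircuit {n m : ℕ} (e : Fin m → Sym2 (Fin n)) (u : Fin m → ℤ) : Prop :=
  u ≠ 0 ∧ (∀ j : Fin n, ∑ i, (incid e i j : ℤ) * u i = 0) ∧
  (∀ v : Fin m → ℤ, v ≠ 0 → (∀ j : Fin n, ∑ i, (incid e i j : ℤ) * v i = 0) →
      {i | v i ≠ 0} ⊆ {i | u i ≠ 0} → {i | v i ≠ 0} = {i | u i ≠ 0}) ∧
  Finset.univ.gcd u = 1

/-- The collection `C` of subsets of `{1,…,m}` that occur as the support of the positive
or the negative part of a circuit. -/
def circuitSupports {n m : ℕ} (e : Fin m → Sym2 (Fin n)) : Set (Set (Fin m)) :=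
  {E | ∃ u : Fin m → ℤ, IsCircuit e u ∧ (E = {i | 0 < u i} ∨ E = {i | u i < 0})}

/-- `C_min`: the minimal elements, with respect to inclusion, of `circuitSupports e`. -/
def Cmin {n m : ℕ} (e : Fin m → Sym2 (Fin n)) : Set (Set (Fin m)) :=
  {E ∈ circuitSupports e | ∀ E' ∈ circuitSupports e, E' ⊆ E → E' = E}

/-- The monomial `x^u` is indispensable for the ideal `I`: every system of binomial
generators of `I` contains a binomial one of whose monomials is `x^u`. -/
def IndispensableMonomial {K : Type*} [CommRing K] {m : ℕ}
    (I : Ideal (MvPolynomial (Fin m) K)) (u : Fin m →₀ ℕ) : Prop :=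
  ∀ S : Set (MvPolynomial (Fin m) K), (∀ p ∈ S, IsBinomial p) → Ideal.span S = I →
    ∃ p ∈ S, ∃ v : Fin m →₀ ℕ,
      p = monomial u 1 - monomial v 1 ∨ p = monomial v 1 - monomial u 1

section Binomials

variable {σ R : Type*} [CommRing R]

def BinomialMove (S : Set (MvPolynomial σ R)) (u v : σ →₀ ℕ) : Prop :=
  ∃ p q c, monomial p 1 - monomial q 1 ∈ S ∧ u = c + p ∧ v = c + q

/-- Adds up the coefficients over each class of exponents connected by moves. It vanishes on
`Ideal.span S`, which is how a binomial of `Ideal.span S` connects its two exponents by moves. -/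
def moveClassCoeff (S : Set (MvPolynomial σ R)) :
    MvPolynomial σ R →ₗ[R] (Quot (BinomialMove S) →₀ R) :=
  Finsupp.lmapDomain R R (Quot.mk _) ∘ₗ (AddMonoidAlgebra.coeffLinearEquiv R).toLinearMap

lemma moveClassCoeff_monomial (S : Set (MvPolynomial σ R)) (u : σ →₀ ℕ) (r : R) :
    moveClassCoeff S (monomial u r) = Finsupp.single (Quot.mk _ u) r := by
  simp [moveClassCoeff, ← single_eq_monomial]

lemma moveClassCoeff_monomial_mul_eq_zero {S : Set (MvPolynomial σ R)}
    (hS : ∀ f ∈ S, IsBinomial f) {f : MvPolynomial σ R} (hf : f ∈ Ideal.span S)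
    (c : σ →₀ ℕ) : moveClassCoeff S (monomial c 1 * f) = 0 := by
  induction hf using Submodule.span_induction generalizing c with
  | mem s hs =>
    obtain ⟨p, q, rfl⟩ := hS s hs
    rw [mul_sub, monomial_mul, monomial_mul, map_sub, moveClassCoeff_monomial,
      moveClassCoeff_monomial, Quot.sound ⟨p, q, c, hs, rfl, rfl⟩, sub_self]
  | zero => rw [mul_zero, map_zero]
  | add x y _ _ hx hy => rw [mul_add, map_add, hx, hy, add_zero]
  | smul a x _ hx =>
    induction a using MvPolynomial.induction_on' generalizing c with
    | monomial d r =>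
      have hr : monomial (c + d) r = r • monomial (c + d) (1 : R) := by
        rw [smul_monomial, smul_eq_mul, mul_one]
      rw [smul_eq_mul, ← mul_assoc, monomial_mul, one_mul, hr, smul_mul_assoc, map_smul, hx,
        smul_zero]
    | add a b ha hb => rw [add_smul, mul_add, map_add, ha, hb, add_zero]

lemma eqvGen_of_monomial_sub_monomial_mem_span [Nontrivial R] {S : Set (MvPolynomial σ R)}
    (hS : ∀ f ∈ S, IsBinomial f) {u v : σ →₀ ℕ}
    (h : monomial u 1 - monomial v 1 ∈ Ideal.span S) : Relation.EqvGen (BinomialMove S) u v := by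
  have h0 := moveClassCoeff_monomial_mul_eq_zero hS h 0
  rw [monomial_zero', C_1, one_mul, map_sub, moveClassCoeff_monomial, moveClassCoeff_monomial,
    sub_eq_zero, Finsupp.single_left_inj one_ne_zero] at h0
  exact Quot.eqvGen_exact h0

def HasBinomialMoveAt (S : Set (MvPolynomial σ R)) (u : σ →₀ ℕ) : Prop :=
  ∃ p q c, (monomial p 1 - monomial q 1 ∈ S ∨ monomial q 1 - monomial p 1 ∈ S) ∧ p ≠ q ∧
    u = c + p

lemma hasBinomialMoveAt_of_eqvGen {S : Set (MvPolynomial σ R)} {u v : σ →₀ ℕ}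
    (h : Relation.EqvGen (BinomialMove S) u v) (huv : u ≠ v) : HasBinomialMoveAt S u := by
  suffices u = v ∨ HasBinomialMoveAt S u ∧ HasBinomialMoveAt S v from
    (this.resolve_left huv).1
  clear huv
  induction h with
  | rel x y hxy =>
    obtain ⟨p, q, c, hmem, rfl, rfl⟩ := hxy
    obtain rfl | hpq := eq_or_ne p q
    · exact .inl rfl
    · exact .inr ⟨⟨p, q, c, .inl hmem, hpq, rfl⟩, ⟨q, p, c, .inr hmem, hpq.symm, rfl⟩⟩
  | refl x => exact .inl rfl
  | symm x y _ ih => exact ih.imp Eq.symm And.symm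
  | trans x y z _ _ ih₁ ih₂ =>
    rcases ih₁ with rfl | ⟨hx, hy⟩
    · exact ih₂
    · rcases ih₂ with rfl | ⟨-, hz⟩
      exacts [.inr ⟨hx, hy⟩, .inr ⟨hx, hz⟩]

lemma hasBinomialMoveAt_of_mem_span [Nontrivial R] {S : Set (MvPolynomial σ R)}
    (hS : ∀ f ∈ S, IsBinomial f) {u v : σ →₀ ℕ}
    (h : monomial u 1 - monomial v 1 ∈ Ideal.span S) (huv : u ≠ v) : HasBinomialMoveAt S u :=
  hasBinomialMoveAt_of_eqvGen (eqvGen_of_monomial_sub_monomial_mem_span hS h) huv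

lemma eq_or_eq_of_monomial_sub_monomial_eq [Nontrivial R] {p q p' q' : σ →₀ ℕ} (hpq : p ≠ q)
    (h : (monomial p 1 - monomial q 1 : MvPolynomial σ R) = monomial p' 1 - monomial q' 1) :
    p = p' ∨ p = q' := by
  classical
  by_contra! hne
  simpa [coeff_monomial, hpq.symm, Ne.symm hne.1, Ne.symm hne.2] using congrArg (coeff p) h

def pairExp (a b : σ) : σ →₀ ℕ := Finsupp.single a 1 + Finsupp.single b 1

lemma X_mul_X_eq_monomial_pairExp (a b : σ) :
    (X a * X b : MvPolynomial σ R) = monomial (pairExp a b) 1 := by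
  rw [X, X, monomial_mul, one_mul, pairExp]

lemma setOf_pairExp_ne_zero (a b : σ) : {i | pairExp a b i ≠ 0} = {a, b} := by
  ext i
  obtain rfl | hia := eq_or_ne i a <;> obtain rfl | hib := eq_or_ne i b <;>
    simp [pairExp, *, Ne.symm]

lemma pairExp_apply_le_one {a b : σ} (hab : a ≠ b) (i : σ) : pairExp a b i ≤ 1 := by
  classical
  simp only [pairExp, Finsupp.add_apply, Finsupp.single_apply]
  split_ifs <;> simp_all

lemma Set.ncard_pair_le {α : Type*} (a b : α) : ({a, b} : Set α).ncard ≤ 2 :=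
  (Set.ncard_insert_le a {b}).trans (by rw [Set.ncard_singleton])

lemma ne_of_two_le_ncard_pair {α : Type*} {a b : α} (h : 2 ≤ ({a, b} : Set α).ncard) : a ≠ b := by
  rintro rfl
  simp at h

lemma eq_pairExp_of_le {p : σ →₀ ℕ} {a b : σ} (hle : ∀ i, p i ≤ pairExp a b i)
    (h2 : 2 ≤ {i | p i ≠ 0}.ncard) : p = pairExp a b := by
  have hsub : {i | p i ≠ 0} ⊆ {i | pairExp a b i ≠ 0} := fun i hi => by
    have := hle i
    simp only [Set.mem_ofPred_eq] at hi ⊢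
    omega
  have hsupp := Set.eq_of_subset_of_ncard_le hsub
    ((setOf_pairExp_ne_zero a b ▸ Set.ncard_pair_le a b).trans h2) (pairExp a b).hasFiniteSupport
  have hab : a ≠ b := ne_of_two_le_ncard_pair (by rwa [hsupp, setOf_pairExp_ne_zero] at h2)
  ext i
  have := hle i
  have := pairExp_apply_le_one hab i
  have := Set.ext_iff.mp hsupp i
  simp only [Set.mem_ofPred_eq] at this
  omega

def IsQuadraticBinomial (f : MvPolynomial σ R) : Prop :=
  ∃ i j k l, f = X i * X j - X k * X l

lemma IsQuadraticBinomial.isBinomial {f : MvPolynomial σ R} (hf : IsQuadraticBinomial f) :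
    IsBinomial f := by
  obtain ⟨i, j, k, l, rfl⟩ := hf
  exact ⟨_, _, by rw [X_mul_X_eq_monomial_pairExp, X_mul_X_eq_monomial_pairExp]⟩

lemma IsQuadraticBinomial.neg {f : MvPolynomial σ R} (hf : IsQuadraticBinomial f) :
    IsQuadraticBinomial (-f) := by
  obtain ⟨i, j, k, l, rfl⟩ := hf
  exact ⟨k, l, i, j, neg_sub _ _⟩

lemma exists_pairExp_of_isQuadraticBinomial [Nontrivial R] {p q : σ →₀ ℕ}
    (hf : IsQuadraticBinomial (monomial p 1 - monomial q 1 : MvPolynomial σ R)) (hpq : p ≠ q) :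
    ∃ a b, p = pairExp a b := by
  obtain ⟨i, j, k, l, h⟩ := hf
  rw [X_mul_X_eq_monomial_pairExp, X_mul_X_eq_monomial_pairExp] at h
  rcases eq_or_eq_of_monomial_sub_monomial_eq hpq h with h | h
  exacts [⟨i, j, h⟩, ⟨k, l, h⟩]

end Binomials

lemma Sym2.eq_of_forall_mem_of_not_isDiag {α : Type*} {z z' : Sym2 α} (hz : ¬ z.IsDiag)
    (h : ∀ x ∈ z, x ∈ z') : z = z' := by
  induction z using Sym2.ind with
  | h x y =>
    exact Sym2.eq_of_ne_mem (by simpa using hz) (Sym2.mem_mk_left x y) (Sym2.mem_mk_right x y)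
      (h x (Sym2.mem_mk_left x y)) (h y (Sym2.mem_mk_right x y))

section IncidenceKernel

variable {n m : ℕ} {e : Fin m → Sym2 (Fin n)}

def degreeVector (e : Fin m → Sym2 (Fin n)) (u : Fin m →₀ ℕ) : Fin n → ℕ :=
  fun j => ∑ i, incid e i j * u i

lemma toricMap_monomial (K : Type*) [CommRing K] (u : Fin m →₀ ℕ) :
    toricMap K e (monomial u 1) =
      monomial (Finsupp.equivFunOnFinite.symm (degreeVector e u)) 1 := by
  rw [toricMap, aeval_monomial, map_one, one_mul, monomial_eq, C_1, one_mul,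
    Finsupp.prod_fintype _ _ fun _ => pow_zero _, Finsupp.prod_fintype _ _ fun _ => pow_zero _]
  simp only [Finsupp.coe_equivFunOnFinite_symm, degreeVector, ← Finset.prod_pow, ← pow_mul]
  rw [Finset.prod_comm]
  simp only [Finset.prod_pow_eq_pow_sum]

lemma monomial_sub_monomial_mem_toricIdeal_iff {K : Type*} [CommRing K] [Nontrivial K]
    {u v : Fin m →₀ ℕ} :
    monomial u 1 - monomial v 1 ∈ toricIdeal K e ↔ degreeVector e u = degreeVector e v := by
  rw [toricIdeal, RingHom.mem_ker, map_sub, sub_eq_zero, toricMap_monomial, toricMap_monomial,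
    (monomial_left_injective one_ne_zero).eq_iff, Finsupp.equivFunOnFinite.symm.injective.eq_iff]

def InIncidenceKer (e : Fin m → Sym2 (Fin n)) (w : Fin m → ℤ) : Prop :=
  ∀ j, ∑ i, (incid e i j : ℤ) * w i = 0

variable {w : Fin m → ℤ}

lemma InIncidenceKer.neg (hw : InIncidenceKer e w) : InIncidenceKer e (-w) := fun j => by
  simpa [Finset.sum_neg_distrib] using hw j

lemma sum_incid_mul_eq_sum_filter (w : Fin m → ℤ) (j : Fin n) :
    ∑ i, (incid e i j : ℤ) * w i = ∑ i with j ∈ e i, w i := by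
  simp [incid, Finset.sum_filter]

lemma InIncidenceKer.exists_pos_of_neg (hw : InIncidenceKer e w) {q : Fin m} {j : Fin n}
    (hq : w q < 0) (hj : j ∈ e q) : ∃ i, j ∈ e i ∧ 0 < w i := by
  by_contra! h
  have hsum := hw j
  rw [sum_incid_mul_eq_sum_filter] at hsum
  exact (Finset.sum_neg' (fun i hi => h i (Finset.mem_filter.1 hi).2)
    ⟨q, Finset.mem_filter.2 ⟨Finset.mem_univ q, hj⟩, hq⟩).ne hsum

lemma InIncidenceKer.exists_pos (hw : InIncidenceKer e w) (hw0 : w ≠ 0) : ∃ p, 0 < w p := by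
  obtain ⟨q, hq⟩ := Function.ne_iff.mp hw0
  rcases (show w q ≠ 0 from hq).lt_or_gt with hq | hq
  · obtain ⟨i, -, hi⟩ := hw.exists_pos_of_neg hq (Sym2.out_fst_mem (e q))
    exact ⟨i, hi⟩
  · exact ⟨q, hq⟩

lemma InIncidenceKer.setOf_pos_ne_singleton (he : Function.Injective e)
    (hl : ∀ i, ¬ (e i).IsDiag) (hw : InIncidenceKer e w) (p : Fin m) :
    {i | 0 < w i} ≠ {p} := by
  intro hp
  have hpos : ∀ i, 0 < w i ↔ i = p := fun i => Set.ext_iff.mp hp i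
  obtain ⟨q, -, hq⟩ := hw.neg.exists_pos_of_neg (show -w p < 0 by simp [(hpos p).2 rfl])
    (Sym2.out_fst_mem (e p))
  have hq : w q < 0 := by simpa using hq
  -- every endpoint of `e q` needs a positively weighted edge through it, which can only be `e p`
  have hqp : e q = e p := Sym2.eq_of_forall_mem_of_not_isDiag (hl q) fun j hj => by
    obtain ⟨i, hji, hi⟩ := hw.exists_pos_of_neg hq hj
    rwa [(hpos i).1 hi] at hji
  exact (he hqp ▸ hq).not_gt ((hpos p).2 rfl)

lemma InIncidenceKer.two_le_ncard_setOf_pos (he : Function.Injective e)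
    (hl : ∀ i, ¬ (e i).IsDiag) (hw : InIncidenceKer e w) (hw0 : w ≠ 0) :
    2 ≤ {i | 0 < w i}.ncard := by
  by_contra! h
  rcases (Set.ncard_le_one_iff_eq (Set.toFinite _)).mp (Nat.le_of_lt_succ h) with h | ⟨p, hp⟩
  · obtain ⟨p, hp⟩ := hw.exists_pos hw0
    exact h.subset hp
  · exact hw.setOf_pos_ne_singleton he hl p hp

lemma InIncidenceKer.two_le_ncard_setOf_neg (he : Function.Injective e)
    (hl : ∀ i, ¬ (e i).IsDiag) (hw : InIncidenceKer e w) (hw0 : w ≠ 0) :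
    2 ≤ {i | w i < 0}.ncard := by
  simpa using hw.neg.two_le_ncard_setOf_pos he hl (neg_ne_zero.mpr hw0)

lemma InIncidenceKer.four_le_ncard_support (he : Function.Injective e)
    (hl : ∀ i, ¬ (e i).IsDiag) (hw : InIncidenceKer e w) (hw0 : w ≠ 0) :
    4 ≤ {i | w i ≠ 0}.ncard := by
  have hsplit : {i | w i ≠ 0} = {i | 0 < w i} ∪ {i | w i < 0} := by
    ext i
    exact ne_iff_lt_or_gt.trans or_comm
  have hdisj : Disjoint {i | 0 < w i} {i | w i < 0} :=
    Set.disjoint_left.mpr fun _ h₁ h₂ => lt_asymm (α := ℤ) h₁ h₂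
  rw [hsplit, Set.ncard_union_eq hdisj]
  have := hw.two_le_ncard_setOf_pos he hl hw0
  have := hw.two_le_ncard_setOf_neg he hl hw0
  omega

lemma two_le_ncard_of_mem_circuitSupports (he : Function.Injective e)
    (hl : ∀ i, ¬ (e i).IsDiag) {E : Set (Fin m)} (hE : E ∈ circuitSupports e) :
    2 ≤ E.ncard := by
  obtain ⟨u, ⟨hu0, hu, -⟩, rfl | rfl⟩ := hE
  · exact InIncidenceKer.two_le_ncard_setOf_pos he hl hu hu0
  · exact InIncidenceKer.two_le_ncard_setOf_neg he hl hu hu0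

end IncidenceKernel

section QuadraticPartners

variable {n m : ℕ} {e : Fin m → Sym2 (Fin n)}

def natDiff (p q : Fin m →₀ ℕ) : Fin m → ℤ := fun i => (p i : ℤ) - q i

lemma inIncidenceKer_natDiff_iff {p q : Fin m →₀ ℕ} :
    InIncidenceKer e (natDiff p q) ↔ degreeVector e p = degreeVector e q := by
  simp only [InIncidenceKer, natDiff, mul_sub, Finset.sum_sub_distrib, sub_eq_zero, funext_iff,
    degreeVector]
  norm_cast

lemma natDiff_ne_zero {p q : Fin m →₀ ℕ} (hpq : p ≠ q) : natDiff p q ≠ 0 := by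
  contrapose! hpq
  ext i
  simpa [natDiff, sub_eq_zero] using congrFun hpq i

lemma setOf_natDiff_pos_subset (p q : Fin m →₀ ℕ) :
    {i | 0 < natDiff p q i} ⊆ {i | p i ≠ 0} := fun i hi => by
  simp only [natDiff, Set.mem_ofPred_eq] at hi ⊢
  omega

lemma exists_degreeVector_eq_of_inIncidenceKer {w : Fin m → ℤ} (hw : InIncidenceKer e w)
    (hw0 : w ≠ 0) : ∃ A B : Fin m →₀ ℕ, A ≠ B ∧ degreeVector e A = degreeVector e B ∧
      {i | 0 < w i} = {i | A i ≠ 0} := by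
  set A := Finsupp.equivFunOnFinite.symm fun i => (w i).toNat
  set B := Finsupp.equivFunOnFinite.symm fun i => (-w i).toNat
  have hAB : natDiff A B = w := by
    funext i
    simp only [natDiff, A, B, Finsupp.coe_equivFunOnFinite_symm]
    omega
  refine ⟨A, B, fun h => hw0 ?_, inIncidenceKer_natDiff_iff.1 (hAB ▸ hw), ?_⟩
  · rw [← hAB, h]
    funext i
    simp [natDiff]
  · ext i
    simp only [A, Set.mem_ofPred_eq, Finsupp.coe_equivFunOnFinite_symm]
    omega

lemma exists_degreeVector_eq_of_mem_circuitSupports {E : Set (Fin m)}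
    (hE : E ∈ circuitSupports e) : ∃ A B : Fin m →₀ ℕ, A ≠ B ∧
      degreeVector e A = degreeVector e B ∧ E = {i | A i ≠ 0} := by
  obtain ⟨u, ⟨hu0, hu, -⟩, rfl | rfl⟩ := hE
  · exact exists_degreeVector_eq_of_inIncidenceKer hu hu0
  · obtain ⟨A, B, hAB, hdeg, hA⟩ :=
      exists_degreeVector_eq_of_inIncidenceKer (InIncidenceKer.neg hu) (neg_ne_zero.2 hu0)
    exact ⟨A, B, hAB, hdeg, by simpa using hA⟩

/-- The monomial `x_a x_b` has a different monomial `x_c x_d` in its fiber, i.e. `e a` and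
`e b` are opposite edges of a `4`-cycle. -/
def HasQuadraticPartner (e : Fin m → Sym2 (Fin n)) (a b : Fin m) : Prop :=
  ∃ c d, pairExp a b ≠ pairExp c d ∧ degreeVector e (pairExp a b) = degreeVector e (pairExp c d)

lemma degreeVector_eq_of_binomial_mem {K : Type*} [CommRing K] [Nontrivial K]
    {S : Set (MvPolynomial (Fin m) K)} (hSI : S ⊆ toricIdeal K e) {p q : Fin m →₀ ℕ}
    (h : monomial p 1 - monomial q 1 ∈ S ∨ monomial q 1 - monomial p 1 ∈ S) :
    degreeVector e p = degreeVector e q := by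
  rcases h with h | h
  · exact monomial_sub_monomial_mem_toricIdeal_iff.1 (hSI h)
  · exact (monomial_sub_monomial_mem_toricIdeal_iff.1 (hSI h)).symm

lemma exists_hasQuadraticPartner_of_mem {K : Type*} [CommRing K] [Nontrivial K]
    {S : Set (MvPolynomial (Fin m) K)} (hS : ∀ f ∈ S, IsQuadraticBinomial f)
    (hSI : S ⊆ toricIdeal K e) {p q : Fin m →₀ ℕ}
    (h : monomial p 1 - monomial q 1 ∈ S ∨ monomial q 1 - monomial p 1 ∈ S) (hpq : p ≠ q) :
    ∃ a b, HasQuadraticPartner e a b ∧ p = pairExp a b := by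
  have hquad : IsQuadraticBinomial (monomial p 1 - monomial q 1 : MvPolynomial (Fin m) K) := by
    rcases h with h | h
    · exact hS _ h
    · simpa using (hS _ h).neg
  obtain ⟨a, b, rfl⟩ := exists_pairExp_of_isQuadraticBinomial hquad hpq
  obtain ⟨c, d, rfl⟩ := exists_pairExp_of_isQuadraticBinomial (by simpa using hquad.neg) hpq.symm
  exact ⟨a, b, ⟨c, d, hpq, degreeVector_eq_of_binomial_mem hSI h⟩, rfl⟩

lemma two_le_ncard_support_of_degreeVector_eq (he : Function.Injective e)
    (hl : ∀ i, ¬ (e i).IsDiag) {p q : Fin m →₀ ℕ} (hpq : p ≠ q)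
    (h : degreeVector e p = degreeVector e q) : 2 ≤ {i | p i ≠ 0}.ncard :=
  ((inIncidenceKer_natDiff_iff.2 h).two_le_ncard_setOf_pos he hl (natDiff_ne_zero hpq)).trans
    (Set.ncard_le_ncard (setOf_natDiff_pos_subset p q))

lemma setOf_natDiff_pairExp_pos (he : Function.Injective e)
    (hl : ∀ i, ¬ (e i).IsDiag) {a b c d : Fin m} (hne : pairExp a b ≠ pairExp c d)
    (hdeg : degreeVector e (pairExp a b) = degreeVector e (pairExp c d)) :
    {i | 0 < natDiff (pairExp a b) (pairExp c d) i} = {a, b} :=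
  Set.eq_of_subset_of_ncard_le
    ((setOf_natDiff_pos_subset _ _).trans (setOf_pairExp_ne_zero a b).subset)
    ((Set.ncard_pair_le a b).trans
      ((inIncidenceKer_natDiff_iff.2 hdeg).two_le_ncard_setOf_pos he hl (natDiff_ne_zero hne)))

lemma isCircuit_natDiff_pairExp (he : Function.Injective e)
    (hl : ∀ i, ¬ (e i).IsDiag) {a b c d : Fin m} (hne : pairExp a b ≠ pairExp c d)
    (hdeg : degreeVector e (pairExp a b) = degreeVector e (pairExp c d)) :
    IsCircuit e (natDiff (pairExp a b) (pairExp c d)) := by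
  set w := natDiff (pairExp a b) (pairExp c d)
  have hw : InIncidenceKer e w := inIncidenceKer_natDiff_iff.2 hdeg
  have hw0 : w ≠ 0 := natDiff_ne_zero hne
  have hpos := setOf_natDiff_pairExp_pos he hl hne hdeg
  have hab : a ≠ b := ne_of_two_le_ncard_pair (hpos ▸ hw.two_le_ncard_setOf_pos he hl hw0)
  have hwa : w a = 1 := by
    have hwa_pos : 0 < w a := (Set.ext_iff.mp hpos a).2 (Set.mem_insert a {b})
    have := pairExp_apply_le_one hab a
    simp only [w, natDiff] at hwa_pos ⊢
    omega
  have hsupp : {i | w i ≠ 0}.ncard ≤ 4 := by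
    have hsub : {i | w i ≠ 0} ⊆ {a, b} ∪ {c, d} := by
      rw [← setOf_pairExp_ne_zero, ← setOf_pairExp_ne_zero]
      intro i hi
      simp only [w, natDiff, Set.mem_ofPred_eq, Set.mem_union] at hi ⊢
      omega
    calc {i | w i ≠ 0}.ncard ≤ ({a, b} ∪ {c, d} : Set (Fin m)).ncard := Set.ncard_le_ncard hsub
      _ ≤ ({a, b} : Set (Fin m)).ncard + ({c, d} : Set (Fin m)).ncard := Set.ncard_union_le _ _
      _ ≤ 4 := by linarith [Set.ncard_pair_le a b, Set.ncard_pair_le c d]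
  refine ⟨hw0, hw, fun v hv0 hv hsub => ?_, ?_⟩
  · exact Set.eq_of_subset_of_ncard_le hsub
      (hsupp.trans (InIncidenceKer.four_le_ncard_support he hl hv hv0))
  · refine Int.eq_one_of_dvd_one ?_ (hwa ▸ Finset.gcd_dvd (Finset.mem_univ a))
    exact Int.nonneg_of_normalize_eq_self Finset.normalize_gcd

lemma HasQuadraticPartner.mem_Cmin (he : Function.Injective e)
    (hl : ∀ i, ¬ (e i).IsDiag) {a b : Fin m} (h : HasQuadraticPartner e a b) :
    {a, b} ∈ Cmin e := by
  obtain ⟨c, d, hne, hdeg⟩ := h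
  refine ⟨⟨_, isCircuit_natDiff_pairExp he hl hne hdeg,
    .inl (setOf_natDiff_pairExp_pos he hl hne hdeg).symm⟩, fun E hE hsub => ?_⟩
  exact Set.eq_of_subset_of_ncard_le hsub
    ((Set.ncard_pair_le a b).trans (two_le_ncard_of_mem_circuitSupports he hl hE))

lemma HasQuadraticPartner.indispensable {K : Type*} [CommRing K] [Nontrivial K]
    (he : Function.Injective e) (hl : ∀ i, ¬ (e i).IsDiag) {a b : Fin m}
    (h : HasQuadraticPartner e a b) : IndispensableMonomial (toricIdeal K e) (pairExp a b) := by
  obtain ⟨c, d, hne, hdeg⟩ := h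
  intro S hS hspan
  have hmem : monomial (pairExp a b) 1 - monomial (pairExp c d) 1 ∈ Ideal.span S :=
    hspan ▸ monomial_sub_monomial_mem_toricIdeal_iff.2 hdeg
  obtain ⟨p, q, c', hpqS, hpq, hc'⟩ := hasBinomialMoveAt_of_mem_span hS hmem hne
  -- the move must use all of `x_a x_b`: a proper divisor has a trivial fiber
  obtain rfl : p = pairExp a b := eq_pairExp_of_le
    (fun i => by rw [hc', Finsupp.add_apply]; omega)
    (two_le_ncard_support_of_degreeVector_eq he hl hpq
      (degreeVector_eq_of_binomial_mem (hspan ▸ Ideal.subset_span) hpqS))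
  rcases hpqS with h | h
  exacts [⟨_, h, q, .inl rfl⟩, ⟨_, h, q, .inr rfl⟩]

end QuadraticPartners

theorem Cmin_eq_supports_indispensable_of_quadratic_general {K : Type*} [Field K]
    {n m : ℕ} (e : Fin m → Sym2 (Fin n))
    (he : Function.Injective e) (hl : ∀ i, ¬ (e i).IsDiag)
    (hquad : ∃ S : Set (MvPolynomial (Fin m) K),
      (∀ p ∈ S, ∃ i j k l : Fin m, p = X i * X j - X k * X l) ∧
      Ideal.span S = toricIdeal K e)
 :
    Cmin e = {E : Set (Fin m) | ∃ u : Fin m →₀ ℕ,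
      IndispensableMonomial (toricIdeal K e) u ∧ E = {i | u i ≠ 0}} := by
  obtain ⟨S, hS, hspan⟩ := hquad
  have hSI : S ⊆ toricIdeal K e := hspan ▸ Ideal.subset_span
  have hSbin : ∀ f ∈ S, IsBinomial f := fun f hf => IsQuadraticBinomial.isBinomial (hS f hf)
  ext E
  constructor
  · rintro ⟨hE, hmin⟩
    obtain ⟨A, B, hAB, hdeg, rfl⟩ := exists_degreeVector_eq_of_mem_circuitSupports hE
    have hmem : monomial A 1 - monomial B 1 ∈ Ideal.span S :=
      hspan ▸ monomial_sub_monomial_mem_toricIdeal_iff.2 hdeg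
    obtain ⟨p, q, c, hpqS, hpq, rfl⟩ := hasBinomialMoveAt_of_mem_span hSbin hmem hAB
    obtain ⟨a, b, hab, rfl⟩ := exists_hasQuadraticPartner_of_mem hS hSI hpqS hpq
    have hsub : {a, b} ⊆ {i | (c + pairExp a b) i ≠ 0} := by
      rw [← setOf_pairExp_ne_zero]
      intro i hi
      simp only [Set.mem_ofPred_eq, Finsupp.add_apply] at hi ⊢
      omega
    refine ⟨pairExp a b, hab.indispensable he hl, ?_⟩
    rw [setOf_pairExp_ne_zero, hmin _ (hab.mem_Cmin he hl).1 hsub]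
  · rintro ⟨w, hw, rfl⟩
    -- removing `0` from `S` makes the generator that contains `x^w` a genuine binomial
    obtain ⟨f, ⟨hfS, hf0⟩, v, hf⟩ := hw (S \ {0}) (fun f hf => hSbin f hf.1)
      (by rw [Ideal.span_sdiff_singleton_zero, hspan])
    have hwv : w ≠ v := by
      rintro rfl
      rcases hf with rfl | rfl <;> exact hf0 (sub_self _)
    obtain ⟨a, b, hab, rfl⟩ := exists_hasQuadraticPartner_of_mem hS hSI
      (by rcases hf with rfl | rfl; exacts [.inl hfS, .inr hfS]) hwv
    rw [setOf_pairExp_ne_zero]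
    exact hab.mem_Cmin he hl

/-- If the toric ideal `I_G` of a finite connected simple graph `G` is
generated by quadratic binomials, then the set `C_min` equals the set of supports of the
indispensable monomials of `I_G`. -/
theorem Cmin_eq_supports_indispensable_of_quadratic {K : Type*} [Field K] [IsAlgClosed K]
    {n m : ℕ} (e : Fin m → Sym2 (Fin n))
    (he : Function.Injective e) (hl : ∀ i, ¬ (e i).IsDiag)
    (hconn : (SimpleGraph.fromEdgeSet (Set.range e)).Connected)
    (hquad : ∃ S : Set (MvPolynomial (Fin m) K),
      (∀ p ∈ S, ∃ i j k l : Fin m, p = X i * X j - X k * X l) ∧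
      Ideal.span S = toricIdeal K e)
 :
    Cmin e = {E : Set (Fin m) | ∃ u : Fin m →₀ ℕ,
      IndispensableMonomial (toricIdeal K e) u ∧ E = {i | u i ≠ 0}} :=
  Cmin_eq_supports_indispensable_of_quadratic_general e he hl hquad
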